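/- arXiv:2006.14446 — 2 statements merged into one kernel-verified Lean document; each statement's English description precedes it below -/
import Mathlib

section
/- Let G be a locally compact group with left Haar measure μ_G and a proper, integer-valued length function 𝓛; set C^G_n := {g ∈ G : 𝓛(g) = n}. Let B be a compact Hausdorff space with a continuous G-action and ν a quasi-invariant Borel probability measure on B, such that the Radon–Nikodym cocycle c(g,b) := (d((g⁻¹)_*ν)/dν)(b) admits a continuous version and the Harish-Chandra function Ξ(g) := ∫_B c(g⁻¹,b)^{1/2} dν(b) is continuous. Assume the subgroup G₀ := {g ∈ G : 𝓛(g) = 0} is compact and open, acts transitively on B, and leaves ν invariant. Let Λ be a discrete subgroup of G, let L := 𝓛|_Λ and C^Λ_n := {γ ∈ Λ : L(γ) = n} (finite by properness), and assume there is c ∈ ℝ such that for all sufficiently large n, μ_G(C^G_n) ≤ c·|C^Λ_n|. Let π be the Koopman representation of Λ on L²(B,ν). Then there is M ∈ ℝ such that for every n with C^Λ_n ≠ ∅, the operator (1/|C^Λ_n|) Σ_{γ∈C^Λ_n} π(γ)/Ξ(γ) on L²(B,ν) has operator norm at most M. -/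
open MeasureTheory
open scoped ENNReal

namespace Stmt1

def IsLengthFun {G : Type*} [Group G] (L : G → ℝ) : Prop :=
  L 1 = 0 ∧ (∀ g, 0 ≤ L g) ∧ (∀ g, L g⁻¹ = L g) ∧ ∀ g h, L (g * h) ≤ L g + L h

end Stmt1

open Measure Set Topology

/-!
Write `w(g, b) = c(g⁻¹, b)^{1/2} / Ξ(g)`, so that the operator in question is
`h ↦ |C^Λ_n|⁻¹ Σ_{γ ∈ C^Λ_n} w(γ, ·) h(γ⁻¹ ·)`. The change of variables `b ↦ γ⁻¹ b` turns the
weight `w(γ, ·)` into `w(γ⁻¹, ·)` (using `Ξ(γ⁻¹) = Ξ(γ)`), and `C^Λ_n` is symmetric, so by Schur's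
test it suffices to bound `Σ_{γ ∈ C^Λ_n} w(γ, b)` by a constant times `|C^Λ_n|`, uniformly in `b`.

Choose an identity neighbourhood `U ⊆ G₀` whose translates `γ U`, `γ ∈ Λ`, are pairwise disjoint.
As `w(·, b)` is right `G₀`-invariant, the sum times `μ_G(U)` is at most `∫_{C^G_n} w(g, b) dμ_G`.
This integral is exactly `μ_G(C^G_n)`: since `C^G_n` is left `G₀`-invariant, `w(g, b)` may be
replaced by its average over `k ∈ G₀` of `w(k g, b) = c(g⁻¹, k⁻¹ b)^{1/2} / Ξ(g)`, and as `G₀`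
acts transitively and preserves `ν`, this average does not depend on `b`, so it equals its
`ν`-average, which is `1`. The growth hypothesis bounds `μ_G(C^G_n)` by `O(|C^Λ_n|)`.
Throughout, continuity of `c` and the full support of `ν` (forced by transitivity) let the
cocycle identity hold everywhere instead of almost everywhere.
-/

/-- Tonelli's theorem without σ-finiteness or second countability: cut off by a compact clopen
box, the continuous integrand has compact support, hence is measurable for the product σ-algebra. -/
theorem setLIntegral_setLIntegral_swap_of_isClopen {X Y : Type*}
    [TopologicalSpace X] [MeasurableSpace X] [OpensMeasurableSpace X]
    [TopologicalSpace Y] [MeasurableSpace Y] [OpensMeasurableSpace Y]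
    {μ : Measure X} {ν : Measure Y} [IsFiniteMeasureOnCompacts μ] [IsFiniteMeasureOnCompacts ν]
    {A : Set X} {C : Set Y} (hA : IsCompact A) (hA' : IsClopen A)
    (hC : IsCompact C) (hC' : IsClopen C) {f : X → Y → ℝ≥0∞}
    (hf : Continuous (Function.uncurry f)) :
    ∫⁻ x in A, ∫⁻ y in C, f x y ∂ν ∂μ = ∫⁻ y in C, ∫⁻ x in A, f x y ∂μ ∂ν := by
  have : IsFiniteMeasure (μ.restrict A) := isFiniteMeasure_restrict.2 hA.measure_ne_top
  have : IsFiniteMeasure (ν.restrict C) := isFiniteMeasure_restrict.2 hC.measure_ne_top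
  set F : X × Y → ℝ≥0∞ := (A ×ˢ C).indicator (Function.uncurry f)
  have hF : Measurable F :=
    HasCompactSupport.measurable_of_prod ((hA'.prod hC').continuous_indicator hf)
      (HasCompactSupport.intro' (hA.prod hC) (hA'.isClosed.prod hC'.isClosed)
        fun _ hp => indicator_of_notMem hp _)
  have hFf : ∀ x ∈ A, ∀ y ∈ C, F (x, y) = f x y := fun x hx y hy =>
    indicator_of_mem (mk_mem_prod hx hy) _
  calc ∫⁻ x in A, ∫⁻ y in C, f x y ∂ν ∂μ = ∫⁻ x in A, ∫⁻ y in C, F (x, y) ∂ν ∂μ :=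
        setLIntegral_congr_fun hA'.isOpen.measurableSet fun x hx =>
          (setLIntegral_congr_fun hC'.isOpen.measurableSet fun y hy => (hFf x hx y hy).symm)
    _ = ∫⁻ y in C, ∫⁻ x in A, F (x, y) ∂μ ∂ν := lintegral_lintegral_swap hF.aemeasurable
    _ = ∫⁻ y in C, ∫⁻ x in A, f x y ∂μ ∂ν :=
        setLIntegral_congr_fun hC'.isOpen.measurableSet fun y hy =>
          setLIntegral_congr_fun hA'.isOpen.measurableSet fun x hx => hFf x hx y hy

theorem Continuous.eq_of_forall_lintegral_ofReal_mul_eq {B : Type*} [TopologicalSpace B]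
    [MeasurableSpace B] [OpensMeasurableSpace B] {ν : Measure B} [SigmaFinite ν]
    [ν.IsOpenPosMeasure] {f g : B → ℝ} (hf : Continuous f) (hg : Continuous g)
    (hf0 : ∀ b, 0 ≤ f b) (hg0 : ∀ b, 0 ≤ g b)
    (h : ∀ F : B → ℝ≥0∞,
      ∫⁻ b, ENNReal.ofReal (f b) * F b ∂ν = ∫⁻ b, ENNReal.ofReal (g b) * F b ∂ν) :
    f = g := by
  have hofReal : (fun b => ENNReal.ofReal (f b)) =ᵐ[ν] fun b => ENNReal.ofReal (g b) := by
    refine ae_eq_of_forall_setLIntegral_eq_of_sigmaFinite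
      (ENNReal.measurable_ofReal.comp hf.measurable)
      (ENNReal.measurable_ofReal.comp hg.measurable) fun s hs _ => ?_
    rw [← lintegral_indicator hs, ← lintegral_indicator hs]
    convert h (s.indicator 1) using 2 <;> ext b <;> by_cases hb : b ∈ s <;> simp [hb]
  refine (hf.ae_eq_iff_eq ν hg).1 ?_
  filter_upwards [hofReal] with b hb
  exact (ENNReal.ofReal_eq_ofReal_iff (hf0 b) (hg0 b)).1 hb

/-- Schur's test for a finite sum of weighted composition operators; `w' i` is the weight `w i`
transported along `σ i`. -/
theorem eLpNorm_sum_smul_comp_le {ι B E : Type*} [MeasurableSpace B] {ν : Measure B}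
    [NormedAddCommGroup E] [NormedSpace ℝ E] {s : Finset ι} {σ : ι → B → B}
    (hσ : ∀ i ∈ s, QuasiMeasurePreserving (σ i) ν ν) {w w' : ι → B → ℝ}
    (hw0 : ∀ i b, 0 ≤ w i b) (hw'0 : ∀ i b, 0 ≤ w' i b)
    (hw : ∀ i ∈ s, Measurable (w i)) (hw' : ∀ i ∈ s, Measurable (w' i))
    (hww' : ∀ i ∈ s, ∀ F : B → ℝ≥0∞,
      ∫⁻ b, ENNReal.ofReal (w i b) * F (σ i b) ∂ν = ∫⁻ b, ENNReal.ofReal (w' i b) * F b ∂ν)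
    {A : ℝ} (hA : ∀ b, ∑ i ∈ s, w i b ≤ A) (hA' : ∀ b, ∑ i ∈ s, w' i b ≤ A)
    {h : B → E} (hh : AEStronglyMeasurable h ν) :
    eLpNorm (fun b => ∑ i ∈ s, w i b • h (σ i b)) 2 ν ≤ ENNReal.ofReal A * eLpNorm h 2 ν := by
  have hsum_le : ∀ (v : ι → B → ℝ), (∀ i b, 0 ≤ v i b) → (∀ b, ∑ i ∈ s, v i b ≤ A) →
      ∀ b, ∑ i ∈ s, ENNReal.ofReal (v i b) ≤ ENNReal.ofReal A := fun v hv0 hv b => by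
    rw [← ENNReal.ofReal_sum_of_nonneg fun i _ => hv0 i b]
    exact ENNReal.ofReal_le_ofReal (hv b)
  have hpointwise : ∀ b, ‖∑ i ∈ s, w i b • h (σ i b)‖ₑ ^ (2 : ℝ)
      ≤ ENNReal.ofReal A * ∑ i ∈ s, ENNReal.ofReal (w i b) * ‖h (σ i b)‖ₑ ^ (2 : ℝ) := fun b => by
    have hCS := ENNReal.inner_le_weight_mul_Lp_of_nonneg s one_le_two
      (fun i => ENNReal.ofReal (w i b)) fun i => ‖h (σ i b)‖ₑ
    calc ‖∑ i ∈ s, w i b • h (σ i b)‖ₑ ^ (2 : ℝ)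
        ≤ (∑ i ∈ s, ENNReal.ofReal (w i b) * ‖h (σ i b)‖ₑ) ^ (2 : ℝ) := by
          gcongr
          refine (enorm_sum_le _ _).trans_eq (Finset.sum_congr rfl fun i _ => ?_)
          rw [enorm_smul, Real.enorm_of_nonneg (hw0 i b)]
      _ ≤ (ENNReal.ofReal A ^ (1 - (2 : ℝ)⁻¹) *
            (∑ i ∈ s, ENNReal.ofReal (w i b) * ‖h (σ i b)‖ₑ ^ (2 : ℝ)) ^ (2 : ℝ)⁻¹) ^ (2 : ℝ) := by
          gcongr
          exact hCS.trans (by gcongr; exact hsum_le w hw0 hA b)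
      _ = _ := by
          rw [ENNReal.mul_rpow_of_nonneg _ _ zero_le_two, ← ENNReal.rpow_mul, ← ENNReal.rpow_mul]
          norm_num
  have hmeas : ∀ i ∈ s,
      AEMeasurable (fun b => ENNReal.ofReal (w i b) * ‖h (σ i b)‖ₑ ^ (2 : ℝ)) ν := fun i hi =>
    (hw i hi).ennreal_ofReal.aemeasurable.mul
      ((hh.comp_quasiMeasurePreserving (hσ i hi)).enorm.pow_const _)
  have hmeas' : ∀ i ∈ s, AEMeasurable (fun b => ENNReal.ofReal (w' i b) * ‖h b‖ₑ ^ (2 : ℝ)) ν :=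
    fun i hi => (hw' i hi).ennreal_ofReal.aemeasurable.mul (hh.enorm.pow_const _)
  have hintegral : ∫⁻ b, ‖∑ i ∈ s, w i b • h (σ i b)‖ₑ ^ (2 : ℝ) ∂ν
      ≤ ENNReal.ofReal A * (ENNReal.ofReal A * ∫⁻ b, ‖h b‖ₑ ^ (2 : ℝ) ∂ν) := by
    calc ∫⁻ b, ‖∑ i ∈ s, w i b • h (σ i b)‖ₑ ^ (2 : ℝ) ∂ν
        ≤ ENNReal.ofReal A * ∑ i ∈ s, ∫⁻ b, ENNReal.ofReal (w i b) * ‖h (σ i b)‖ₑ ^ (2 : ℝ) ∂ν := by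
          rw [← lintegral_finsetSum' _ hmeas, ← lintegral_const_mul' _ _ ENNReal.ofReal_ne_top]
          exact lintegral_mono hpointwise
      _ = ENNReal.ofReal A * ∫⁻ b, ∑ i ∈ s, ENNReal.ofReal (w' i b) * ‖h b‖ₑ ^ (2 : ℝ) ∂ν := by
          rw [lintegral_finsetSum' _ hmeas']
          exact congrArg _ (Finset.sum_congr rfl fun i hi => hww' i hi fun b => ‖h b‖ₑ ^ (2 : ℝ))
      _ ≤ ENNReal.ofReal A * (ENNReal.ofReal A * ∫⁻ b, ‖h b‖ₑ ^ (2 : ℝ) ∂ν) := by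
          gcongr ENNReal.ofReal A * ?_
          rw [← lintegral_const_mul' _ _ ENNReal.ofReal_ne_top]
          refine lintegral_mono fun b => ?_
          rw [← Finset.sum_mul]
          gcongr
          exact hsum_le w' hw'0 hA' b
  have hpow : ∀ f : B → E, eLpNorm f 2 ν ^ (2 : ℝ) = ∫⁻ b, ‖f b‖ₑ ^ (2 : ℝ) ∂ν := fun f => by
    simpa using eLpNorm_nnreal_pow_eq_lintegral (μ := ν) (f := f) (p := 2) two_ne_zero
  rw [← ENNReal.rpow_le_rpow_iff zero_lt_two, ENNReal.mul_rpow_of_nonneg _ _ zero_le_two,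
    hpow, hpow, ENNReal.rpow_two, sq, mul_assoc]
  exact hintegral

theorem sum_mul_measure_le_setLIntegral {G : Type*} [Group G] [MeasurableSpace G]
    [MeasurableMul G] {μ : Measure G} [μ.IsMulLeftInvariant] {U S : Set G}
    (hU : MeasurableSet U) {s : Finset G}
    (hdisj : (s : Set G).PairwiseDisjoint fun γ => (γ⁻¹ * ·) ⁻¹' U)
    (hsub : ∀ γ ∈ s, (γ⁻¹ * ·) ⁻¹' U ⊆ S) {f : G → ℝ≥0∞}
    (hf : ∀ γ ∈ s, ∀ u ∈ U, f (γ * u) = f γ) :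
    ∑ γ ∈ s, f γ * μ U ≤ ∫⁻ g in S, f g ∂μ := by
  have hmeas : ∀ γ : G, MeasurableSet ((γ⁻¹ * ·) ⁻¹' U) := fun γ => measurable_const_mul _ hU
  calc ∑ γ ∈ s, f γ * μ U = ∑ γ ∈ s, ∫⁻ g in (γ⁻¹ * ·) ⁻¹' U, f g ∂μ :=
        Finset.sum_congr rfl fun γ hγ => by
          rw [setLIntegral_congr_fun (hmeas γ) fun g hg => by
              simpa using hf γ hγ _ hg, setLIntegral_const, measure_preimage_mul]
    _ = ∫⁻ g in ⋃ γ ∈ s, (γ⁻¹ * ·) ⁻¹' U, f g ∂μ :=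
        (lintegral_biUnion_finset hdisj (fun γ _ => hmeas γ) f).symm
    _ ≤ ∫⁻ g in S, f g ∂μ := lintegral_mono_set (iUnion₂_subset hsub)

theorem exists_le_ofReal_mul_of_forall_ge {a : ℕ → ℝ≥0∞} (ha : ∀ n, a n ≠ ∞) {m : ℕ → ℕ}
    {c₀ : ℝ} {N : ℕ} (h : ∀ n, N ≤ n → a n ≤ ENNReal.ofReal (c₀ * m n)) :
    ∃ R, 0 ≤ R ∧ ∀ n, m n ≠ 0 → a n ≤ ENNReal.ofReal (R * m n) := by
  set R := max c₀ (∑ k ∈ Finset.range N, (a k).toReal)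
  have hR : 0 ≤ R := le_max_of_le_right (Finset.sum_nonneg fun _ _ => ENNReal.toReal_nonneg)
  refine ⟨R, hR, fun n hn => ?_⟩
  have hm : (1 : ℝ) ≤ m n := by exact_mod_cast Nat.one_le_iff_ne_zero.2 hn
  rcases le_or_gt N n with hN | hN
  · exact (h n hN).trans (ENNReal.ofReal_le_ofReal (by gcongr; exact le_max_left _ _))
  · rw [← ENNReal.ofReal_toReal (ha n)]
    refine ENNReal.ofReal_le_ofReal (le_trans ?_ (le_mul_of_one_le_right hR hm))
    exact (Finset.single_le_sum (fun _ _ => ENNReal.toReal_nonneg)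
      (Finset.mem_range.2 hN)).trans (le_max_right _ _)

theorem Subgroup.preimage_mul_left_eq_self {G : Type*} [Group G] {K : Subgroup G} {k : G}
    (hk : k ∈ K) : (k * ·) ⁻¹' (K : Set G) = K :=
  Set.ext fun _ => K.mul_mem_cancel_left hk

theorem Subgroup.exists_isOpen_pairwiseDisjoint_preimage_mul_left {G : Type*} [Group G]
    [TopologicalSpace G] [IsTopologicalGroup G] (Λ : Subgroup G) [DiscreteTopology Λ]
    {W : Set G} (hW : W ∈ 𝓝 (1 : G)) :
    ∃ U, IsOpen U ∧ (1 : G) ∈ U ∧ U ⊆ W ∧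
      (Λ : Set G).PairwiseDisjoint fun γ => (γ⁻¹ * ·) ⁻¹' U := by
  obtain ⟨V, hV, hVΛ⟩ := nhds_inter_eq_singleton_of_mem_discrete
    (SetLike.isDiscrete_iff_discreteTopology.2 ‹_›) Λ.one_mem
  obtain ⟨V', hV', hV'div⟩ := exists_nhds_split_inv hV
  refine ⟨interior (V' ∩ W), isOpen_interior,
    mem_interior_iff_mem_nhds.2 (Filter.inter_mem hV' hW), interior_subset.trans inter_subset_right,
    fun γ₁ hγ₁ γ₂ hγ₂ hne => Set.disjoint_left.2 fun x hx₁ hx₂ => hne ?_⟩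
  have hdiv := hV'div _ (interior_subset hx₂).1 _ (interior_subset hx₁).1
  rw [div_eq_mul_inv, mul_inv_rev, inv_inv, mul_assoc, mul_inv_cancel_left] at hdiv
  have h1 : γ₂⁻¹ * γ₁ ∈ V ∩ Λ := ⟨hdiv, Λ.mul_mem (Λ.inv_mem hγ₂) hγ₁⟩
  rw [hVΛ, mem_singleton_iff, inv_mul_eq_one] at h1
  exact h1.symm

namespace Stmt1.IsLengthFun

variable {G : Type*} [Group G] {𝓛 : G → ℝ}

theorem map_mul_of_map_eq_zero_right (h : IsLengthFun 𝓛) {u : G} (hu : 𝓛 u = 0) (g : G) :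
    𝓛 (g * u) = 𝓛 g := by
  refine le_antisymm (by simpa [hu] using h.2.2.2 g u) ?_
  simpa [h.2.2.1, hu] using h.2.2.2 (g * u) u⁻¹

theorem map_mul_of_map_eq_zero_left (h : IsLengthFun 𝓛) {k : G} (hk : 𝓛 k = 0) (g : G) :
    𝓛 (k * g) = 𝓛 g := by
  rw [← h.2.2.1, mul_inv_rev, h.map_mul_of_map_eq_zero_right (by rwa [h.2.2.1]), h.2.2.1]

def zeroSubgroup (h : IsLengthFun 𝓛) : Subgroup G where
  carrier := {g | 𝓛 g = 0}
  one_mem' := h.1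
  mul_mem' {a b} ha hb := by
    simp only [mem_ofPred_eq] at ha hb ⊢
    rw [h.map_mul_of_map_eq_zero_left ha, hb]
  inv_mem' {a} ha := by
    simp only [mem_ofPred_eq] at ha ⊢
    rw [h.2.2.1, ha]

theorem preimage_mul_left_setOf_eq (h : IsLengthFun 𝓛) {k : G} (hk : 𝓛 k = 0) (t : ℝ) :
    (k * ·) ⁻¹' {g | 𝓛 g = t} = {g | 𝓛 g = t} :=
  Set.ext fun g => by simp [h.map_mul_of_map_eq_zero_left hk]

theorem isLocallyConstant [TopologicalSpace G] [ContinuousMul G] (h : IsLengthFun 𝓛)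
    (h0 : IsOpen {g | 𝓛 g = 0}) : IsLocallyConstant 𝓛 :=
  IsLocallyConstant.iff_isOpen_fiber.2 fun t => isOpen_iff_forall_mem_open.2 fun g hg =>
    ⟨(g⁻¹ * ·) ⁻¹' {g | 𝓛 g = 0}, fun x hx => by
      have hx' : 𝓛 (g * (g⁻¹ * x)) = 𝓛 g := h.map_mul_of_map_eq_zero_right hx g
      rw [mul_inv_cancel_left] at hx'
      rwa [mem_preimage, hx'],
      h0.preimage (continuous_const_mul g⁻¹), by simp [h.1]⟩

end Stmt1.IsLengthFun

structure IsRNCocycle {G B : Type*} [Group G] [TopologicalSpace B] [MeasurableSpace B]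
    [MulAction G B] (ν : Measure B) (c : G → B → ℝ) : Prop where
  pos : ∀ g b, 0 < c g b
  continuous : ∀ g, Continuous (c g)
  map_inv_smul : ∀ g : G, ν.map (g⁻¹ • ·) = ν.withDensity fun b => ENNReal.ofReal (c g b)

namespace IsRNCocycle

variable {G B : Type*} [Group G] [TopologicalSpace B] [MeasurableSpace B] [MulAction G B]
  {ν : Measure B} {c : G → B → ℝ}

theorem of_ae_eq_rnDeriv [IsFiniteMeasure ν] (hq : ∀ g : G, ν.map (g • ·) ≪ ν)
    (hpos : ∀ g b, 0 < c g b) (hcont : ∀ g, Continuous (c g))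
    (hrn : ∀ g : G,
      (fun b => ENNReal.ofReal (c g b)) =ᵐ[ν] (ν.map (g⁻¹ • ·)).rnDeriv ν) :
    IsRNCocycle ν c :=
  ⟨hpos, hcont, fun g => by
    rw [withDensity_congr_ae (hrn g), withDensity_rnDeriv_eq _ _ (hq g⁻¹)]⟩

variable [BorelSpace B] [ContinuousConstSMul G B]

theorem lintegral_comp_inv_smul (hc : IsRNCocycle ν c) (g : G) (F : B → ℝ≥0∞) :
    ∫⁻ b, F (g⁻¹ • b) ∂ν = ∫⁻ b, ENNReal.ofReal (c g b) * F b ∂ν := by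
  calc ∫⁻ b, F (g⁻¹ • b) ∂ν = ∫⁻ b, F b ∂(ν.map (g⁻¹ • ·)) :=
        (lintegral_map_equiv F (MeasurableEquiv.smul g⁻¹)).symm
    _ = _ := by
        rw [hc.map_inv_smul]
        exact lintegral_withDensity_eq_lintegral_mul_non_measurable _
          (ENNReal.measurable_ofReal.comp (hc.continuous g).measurable)
          (ae_of_all _ fun _ => ENNReal.ofReal_lt_top) F

variable [SigmaFinite ν] [ν.IsOpenPosMeasure]

theorem map_mul (hc : IsRNCocycle ν c) (g₁ g₂ : G) (b : B) :
    c (g₁ * g₂) b = c g₁ (g₂ • b) * c g₂ b := by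
  suffices c (g₁ * g₂) = fun b => c g₂ b * c g₁ (g₂ • b) by rw [this, mul_comm]
  refine (hc.continuous _).eq_of_forall_lintegral_ofReal_mul_eq (ν := ν)
    ((hc.continuous g₂).mul ((hc.continuous g₁).comp (continuous_const_smul g₂)))
    (fun b => (hc.pos _ b).le) (fun b => (mul_pos (hc.pos _ _) (hc.pos _ _)).le) fun F => ?_
  calc ∫⁻ b, ENNReal.ofReal (c (g₁ * g₂) b) * F b ∂ν
      = ∫⁻ b, F (g₂⁻¹ • g₁⁻¹ • b) ∂ν := by
        simp only [← hc.lintegral_comp_inv_smul, mul_inv_rev, mul_smul]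
    _ = ∫⁻ b, ENNReal.ofReal (c g₁ b) * F (g₂⁻¹ • b) ∂ν :=
        hc.lintegral_comp_inv_smul g₁ fun b => F (g₂⁻¹ • b)
    _ = ∫⁻ b, ENNReal.ofReal (c g₁ (g₂ • g₂⁻¹ • b)) * F (g₂⁻¹ • b) ∂ν := by
        simp only [smul_inv_smul]
    _ = ∫⁻ b, ENNReal.ofReal (c g₂ b * c g₁ (g₂ • b)) * F b ∂ν := by
        rw [hc.lintegral_comp_inv_smul g₂ fun b => ENNReal.ofReal (c g₁ (g₂ • b)) * F b]
        simp only [← mul_assoc, ENNReal.ofReal_mul (hc.pos _ _).le]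

theorem apply_inv_eq_one (hc : IsRNCocycle ν c) {k : G} (hk : ν.map (k • ·) = ν) (b : B) :
    c k⁻¹ b = 1 := by
  suffices c k⁻¹ = fun _ => 1 from congrFun this b
  refine (hc.continuous _).eq_of_forall_lintegral_ofReal_mul_eq (ν := ν) continuous_const
    (fun b => (hc.pos _ b).le) (fun _ => zero_le_one) fun F => ?_
  rw [← hc.lintegral_comp_inv_smul]
  simp only [inv_inv, ENNReal.ofReal_one, one_mul]
  conv_rhs => rw [← hk]
  exact (lintegral_map_equiv F (MeasurableEquiv.smul k)).symm

theorem apply_inv_smul (hc : IsRNCocycle ν c) (g : G) (b : B) :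
    c g⁻¹ (g • b) = (c g b)⁻¹ := by
  have h1 : c 1 b = 1 := by simpa using hc.apply_inv_eq_one (k := 1) (by simp) b
  refine eq_inv_of_mul_eq_one_left ?_
  rw [← hc.map_mul, inv_mul_cancel, h1]

theorem lintegral_sqrt_mul_comp_inv_smul (hc : IsRNCocycle ν c) (g : G) (F : B → ℝ≥0∞) :
    ∫⁻ b, ENNReal.ofReal √(c g⁻¹ b) * F (g⁻¹ • b) ∂ν
      = ∫⁻ b, ENNReal.ofReal √(c g b) * F b ∂ν := by
  have key : ∀ b, c g b * √(c g⁻¹ (g • b)) = √(c g b) := fun b => by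
    rw [hc.apply_inv_smul, Real.sqrt_inv, ← div_eq_mul_inv,
      div_eq_iff (Real.sqrt_pos.2 (hc.pos g b)).ne', Real.mul_self_sqrt (hc.pos g b).le]
  calc ∫⁻ b, ENNReal.ofReal √(c g⁻¹ b) * F (g⁻¹ • b) ∂ν
      = ∫⁻ b, (fun x => ENNReal.ofReal √(c g⁻¹ (g • x)) * F x) (g⁻¹ • b) ∂ν := by
        simp only [smul_inv_smul]
    _ = _ := by
        rw [hc.lintegral_comp_inv_smul g fun x => ENNReal.ofReal √(c g⁻¹ (g • x)) * F x]
        simp only [← mul_assoc, ← ENNReal.ofReal_mul (hc.pos _ _).le, key]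

end IsRNCocycle

noncomputable def harishChandra {G B : Type*} [Group G] [MeasurableSpace B] [MulAction G B]
    (ν : Measure B) (c : G → B → ℝ) (g : G) : ℝ :=
  ∫ b, √(c g⁻¹ b) ∂ν

/-- `(π(g) 𝟙)(b) / Ξ(g)`, for the Koopman representation `π`. -/
noncomputable def koopmanWeight {G B : Type*} [Group G] [MeasurableSpace B] [MulAction G B]
    (ν : Measure B) (c : G → B → ℝ) (g : G) (b : B) : ℝ :=
  √(c g⁻¹ b) / harishChandra ν c g

section HarishChandra

variable {G B : Type*} [Group G] [MeasurableSpace B] [MulAction G B]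

theorem harishChandra_nonneg (ν : Measure B) (c : G → B → ℝ) (g : G) :
    0 ≤ harishChandra ν c g :=
  integral_nonneg fun _ => Real.sqrt_nonneg _

theorem koopmanWeight_nonneg (ν : Measure B) (c : G → B → ℝ) (g : G) (b : B) :
    0 ≤ koopmanWeight ν c g b :=
  div_nonneg (Real.sqrt_nonneg _) (harishChandra_nonneg ν c g)

end HarishChandra

namespace IsRNCocycle

variable {G B : Type*} [Group G] [TopologicalSpace B] [MeasurableSpace B] [BorelSpace B]
  [MulAction G B] {ν : Measure B} {c : G → B → ℝ}

theorem ofReal_harishChandra [CompactSpace B] [IsFiniteMeasure ν] (hc : IsRNCocycle ν c)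
    (g : G) : ENNReal.ofReal (harishChandra ν c g) = ∫⁻ b, ENNReal.ofReal √(c g⁻¹ b) ∂ν :=
  ofReal_integral_eq_lintegral_ofReal
    ((hc.continuous g⁻¹).sqrt.integrable_of_hasCompactSupport (.of_compactSpace _))
    (ae_of_all _ fun _ => Real.sqrt_nonneg _)

theorem harishChandra_pos [CompactSpace B] [IsFiniteMeasure ν] [NeZero ν]
    (hc : IsRNCocycle ν c) (g : G) : 0 < harishChandra ν c g := by
  refine (integral_pos_iff_support_of_nonneg (fun _ => Real.sqrt_nonneg _)
    ((hc.continuous g⁻¹).sqrt.integrable_of_hasCompactSupport (.of_compactSpace _))).2 ?_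
  rw [Function.support_eq_univ fun b => (Real.sqrt_pos.2 (hc.pos _ b)).ne']
  exact measure_univ_pos.2 (NeZero.ne ν)

variable [ContinuousConstSMul G B] [SigmaFinite ν] [ν.IsOpenPosMeasure]

theorem harishChandra_mul_right (hc : IsRNCocycle ν c) {u : G} (hu : ν.map (u • ·) = ν)
    (g : G) : harishChandra ν c (g * u) = harishChandra ν c g := by
  refine integral_congr_ae (ae_of_all _ fun b => ?_)
  simp only [mul_inv_rev, hc.map_mul, hc.apply_inv_eq_one hu, one_mul]

theorem koopmanWeight_mul_right (hc : IsRNCocycle ν c) {u : G} (hu : ν.map (u • ·) = ν)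
    (g : G) (b : B) : koopmanWeight ν c (g * u) b = koopmanWeight ν c g b := by
  simp only [koopmanWeight, hc.harishChandra_mul_right hu, mul_inv_rev, hc.map_mul,
    hc.apply_inv_eq_one hu, one_mul]

variable [CompactSpace B] [IsFiniteMeasure ν]

theorem harishChandra_inv (hc : IsRNCocycle ν c) (g : G) :
    harishChandra ν c g⁻¹ = harishChandra ν c g := by
  have h := hc.lintegral_sqrt_mul_comp_inv_smul g 1
  simp only [Pi.one_apply, mul_one] at h
  rw [← ENNReal.ofReal_eq_ofReal_iff (harishChandra_nonneg ..) (harishChandra_nonneg ..),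
    hc.ofReal_harishChandra, hc.ofReal_harishChandra, inv_inv, h]

theorem harishChandra_mul_left (hc : IsRNCocycle ν c) {k : G} (hk : ν.map (k⁻¹ • ·) = ν)
    (g : G) : harishChandra ν c (k * g) = harishChandra ν c g := by
  rw [← hc.harishChandra_inv, mul_inv_rev, hc.harishChandra_mul_right hk, hc.harishChandra_inv]

theorem koopmanWeight_mul_left (hc : IsRNCocycle ν c) {k : G} (hk : ν.map (k • ·) = ν)
    (hk' : ν.map (k⁻¹ • ·) = ν) (g : G) (b : B) :
    koopmanWeight ν c (k * g) b = √(c g⁻¹ (k⁻¹ • b)) / harishChandra ν c g := by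
  simp only [koopmanWeight, hc.harishChandra_mul_left hk', mul_inv_rev, hc.map_mul,
    hc.apply_inv_eq_one hk, mul_one]

theorem lintegral_koopmanWeight_mul_comp_inv_smul (hc : IsRNCocycle ν c) (g : G)
    (F : B → ℝ≥0∞) :
    ∫⁻ b, ENNReal.ofReal (koopmanWeight ν c g b) * F (g⁻¹ • b) ∂ν
      = ∫⁻ b, ENNReal.ofReal (koopmanWeight ν c g⁻¹ b) * F b ∂ν := by
  have hsplit : ∀ (h : G) (b : B), ENNReal.ofReal (koopmanWeight ν c h b)
      = ENNReal.ofReal √(c h⁻¹ b) * ENNReal.ofReal (harishChandra ν c h)⁻¹ := fun h b => by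
    rw [koopmanWeight, div_eq_mul_inv, ENNReal.ofReal_mul (Real.sqrt_nonneg _)]
  simp only [hsplit, inv_inv, hc.harishChandra_inv, mul_right_comm _ _ (F _)]
  simp only [mul_assoc]
  exact hc.lintegral_sqrt_mul_comp_inv_smul g fun b => F b * ENNReal.ofReal (harishChandra ν c g)⁻¹

end IsRNCocycle

section CompactOpenSubgroup

variable {G : Type*} [Group G] [TopologicalSpace G] [IsTopologicalGroup G] [MeasurableSpace G]
  [BorelSpace G] {μ : Measure G} [μ.IsMulLeftInvariant] {K : Subgroup G}

theorem setLIntegral_comp_mul_left_of_preimage_eq {S : Set G} {k : G} (hS : (k * ·) ⁻¹' S = S)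
    (f : G → ℝ≥0∞) : ∫⁻ g in S, f (k * g) ∂μ = ∫⁻ g in S, f g ∂μ := by
  conv_lhs => rw [← hS]
  exact (measurePreserving_mul_left μ k).setLIntegral_comp_preimage_emb
    (measurableEmbedding_mulLeft k) f S

variable [IsFiniteMeasureOnCompacts μ]

theorem setLIntegral_comp_inv_smul_eq_measure_mul_lintegral {B : Type*} [TopologicalSpace B]
    [CompactSpace B] [MeasurableSpace B] [BorelSpace B] [MulAction G B] [ContinuousSMul G B]
    {ν : Measure B} [IsProbabilityMeasure ν] [SMulInvariantMeasure K B ν]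
    [MulAction.IsPretransitive K B] (hK : IsCompact (K : Set G)) (hKo : IsOpen (K : Set G))
    {F : B → ℝ≥0∞} (hF : Continuous F) (b : B) :
    ∫⁻ k in (K : Set G), F (k⁻¹ • b) ∂μ = μ K * ∫⁻ x, F x ∂ν := by
  -- `Φ` is `K`-invariant, hence constant by transitivity, hence equal to its `ν`-average.
  set Φ : B → ℝ≥0∞ := fun x => ∫⁻ k in (K : Set G), F (k⁻¹ • x) ∂μ
  have hΦ_smul : ∀ k ∈ K, ∀ x, Φ (k • x) = Φ x := fun k hk x => by
    have := setLIntegral_comp_mul_left_of_preimage_eq (μ := μ) (K.preimage_mul_left_eq_self hk)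
      fun k' => F (k'⁻¹ • k • x)
    simpa [Φ, mul_smul] using this.symm
  have hΦ_const : ∀ x, Φ x = Φ b := fun x => by
    obtain ⟨k, rfl⟩ := MulAction.exists_smul_eq K b x
    exact hΦ_smul k k.2 b
  have hF_smul : ∀ k ∈ K, ∫⁻ x, F (k⁻¹ • x) ∂ν = ∫⁻ x, F x ∂ν := fun k hk =>
    (measurePreserving_smul (⟨k, hk⟩⁻¹ : K) ν).lintegral_comp_emb
      (measurableEmbedding_const_smul _) F
  calc Φ b = ∫⁻ x, Φ x ∂ν := by simp [hΦ_const]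
    _ = ∫⁻ k in (K : Set G), ∫⁻ x, F (k⁻¹ • x) ∂ν ∂μ := by
        simpa using setLIntegral_setLIntegral_swap_of_isClopen (μ := ν) (ν := μ)
          isCompact_univ isClopen_univ hK ⟨K.isClosed_of_isOpen hKo, hKo⟩
          (f := fun x k => F (k⁻¹ • x))
          (hF.comp (continuous_smul.comp (continuous_snd.inv.prodMk continuous_fst)))
    _ = μ K * ∫⁻ x, F x ∂ν := by
        rw [setLIntegral_congr_fun hKo.measurableSet hF_smul, setLIntegral_const, mul_comm]

theorem measure_mul_setLIntegral_eq_setLIntegral_setLIntegral (hK : IsCompact (K : Set G))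
    (hKo : IsOpen (K : Set G)) {S : Set G} (hS : IsCompact S) (hS' : IsClopen S)
    (hKS : ∀ k ∈ K, (k * ·) ⁻¹' S = S) {f : G → ℝ≥0∞} (hf : Continuous f) :
    μ K * ∫⁻ g in S, f g ∂μ = ∫⁻ g in S, ∫⁻ k in (K : Set G), f (k * g) ∂μ ∂μ := by
  calc μ K * ∫⁻ g in S, f g ∂μ = ∫⁻ k in (K : Set G), ∫⁻ g in S, f g ∂μ ∂μ := by
        rw [setLIntegral_const, mul_comm]
    _ = ∫⁻ k in (K : Set G), ∫⁻ g in S, f (k * g) ∂μ ∂μ :=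
        setLIntegral_congr_fun hKo.measurableSet fun k hk =>
          (setLIntegral_comp_mul_left_of_preimage_eq (hKS k hk) f).symm
    _ = _ := setLIntegral_setLIntegral_swap_of_isClopen hK ⟨K.isClosed_of_isOpen hKo, hKo⟩
        hS hS' (f := fun k g => f (k * g)) (hf.comp continuous_mul)

end CompactOpenSubgroup

section SphereAverage

variable {G : Type*} [Group G] [TopologicalSpace G] [IsTopologicalGroup G] [MeasurableSpace G]
  [BorelSpace G] {μ : Measure G} [μ.IsMulLeftInvariant] [IsFiniteMeasureOnCompacts μ]
  {K : Subgroup G} {B : Type*} [TopologicalSpace B] [CompactSpace B] [MeasurableSpace B]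
  [BorelSpace B] [MulAction G B] [ContinuousSMul G B] {ν : Measure B} [IsProbabilityMeasure ν]
  [ν.IsOpenPosMeasure] [SMulInvariantMeasure K B ν] [MulAction.IsPretransitive K B]
  {c : G → B → ℝ}

theorem IsRNCocycle.setLIntegral_koopmanWeight_comp_mul_left (hc : IsRNCocycle ν c)
    (hK : IsCompact (K : Set G)) (hKo : IsOpen (K : Set G)) (g : G) (b : B) :
    ∫⁻ k in (K : Set G), ENNReal.ofReal (koopmanWeight ν c (k * g) b) ∂μ = μ K := by
  have hmap : ∀ k ∈ K, ν.map (k • ·) = ν := fun k hk =>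
    (measurePreserving_smul (⟨k, hk⟩ : K) ν).map_eq
  have hΞ := hc.harishChandra_pos g
  calc ∫⁻ k in (K : Set G), ENNReal.ofReal (koopmanWeight ν c (k * g) b) ∂μ
      = ∫⁻ k in (K : Set G), ENNReal.ofReal √(c g⁻¹ (k⁻¹ • b)) *
          ENNReal.ofReal (harishChandra ν c g)⁻¹ ∂μ :=
        setLIntegral_congr_fun hKo.measurableSet fun k hk => by
          rw [hc.koopmanWeight_mul_left (hmap k hk) (hmap _ (K.inv_mem hk)), div_eq_mul_inv,
            ENNReal.ofReal_mul (Real.sqrt_nonneg _)]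
    _ = μ K * ENNReal.ofReal (harishChandra ν c g) * ENNReal.ofReal (harishChandra ν c g)⁻¹ := by
        rw [lintegral_mul_const' _ _ ENNReal.ofReal_ne_top,
          setLIntegral_comp_inv_smul_eq_measure_mul_lintegral (ν := ν)
            (F := fun x => ENNReal.ofReal √(c g⁻¹ x))
            hK hKo (ENNReal.continuous_ofReal.comp (hc.continuous g⁻¹).sqrt),
          hc.ofReal_harishChandra]
    _ = μ K := by
        rw [mul_assoc, ← ENNReal.ofReal_mul hΞ.le, mul_inv_cancel₀ hΞ.ne', ENNReal.ofReal_one,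
          mul_one]

variable [μ.IsOpenPosMeasure]

theorem IsRNCocycle.setLIntegral_koopmanWeight_eq_measure (hc : IsRNCocycle ν c)
    (hcont : ∀ b, Continuous (c · b)) (hΞ : Continuous (harishChandra ν c))
    (hK : IsCompact (K : Set G)) (hKo : IsOpen (K : Set G)) {S : Set G} (hS : IsCompact S)
    (hS' : IsClopen S) (hKS : ∀ k ∈ K, (k * ·) ⁻¹' S = S) (b : B) :
    ∫⁻ g in S, ENNReal.ofReal (koopmanWeight ν c g b) ∂μ = μ S := by
  have hw : Continuous fun g => ENNReal.ofReal (koopmanWeight ν c g b) :=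
    ENNReal.continuous_ofReal.comp (((hcont b).comp continuous_inv).sqrt.div hΞ
      fun g => (hc.harishChandra_pos g).ne')
  rw [← ENNReal.mul_right_inj (hKo.measure_ne_zero μ ⟨1, K.one_mem⟩) hK.measure_ne_top,
    measure_mul_setLIntegral_eq_setLIntegral_setLIntegral hK hKo hS hS' hKS hw,
    setLIntegral_congr_fun hS'.isOpen.measurableSet fun g _ =>
      hc.setLIntegral_koopmanWeight_comp_mul_left hK hKo g b,
    setLIntegral_const, mul_comm]

theorem IsRNCocycle.sum_koopmanWeight_mul_measure_le (hc : IsRNCocycle ν c)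
    (hcont : ∀ b, Continuous (c · b)) (hΞ : Continuous (harishChandra ν c))
    (hK : IsCompact (K : Set G)) (hKo : IsOpen (K : Set G)) {S : Set G} (hS : IsCompact S)
    (hS' : IsClopen S) (hKS : ∀ k ∈ K, (k * ·) ⁻¹' S = S) {U : Set G} (hU : IsOpen U)
    (hUK : U ⊆ K) {s : Finset G} (hdisj : (s : Set G).PairwiseDisjoint fun γ => (γ⁻¹ * ·) ⁻¹' U)
    (hsub : ∀ γ ∈ s, (γ⁻¹ * ·) ⁻¹' U ⊆ S) (b : B) :
    ∑ γ ∈ s, ENNReal.ofReal (koopmanWeight ν c γ b) * μ U ≤ μ S := by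
  refine (sum_mul_measure_le_setLIntegral hU.measurableSet hdisj hsub fun γ _ u hu => ?_).trans_eq
    (hc.setLIntegral_koopmanWeight_eq_measure hcont hΞ hK hKo hS hS' hKS b)
  rw [hc.koopmanWeight_mul_right (measurePreserving_smul (⟨u, hUK hu⟩ : K) ν).map_eq]

end SphereAverage

theorem IsRNCocycle.eLpNorm_inv_card_smul_sum_le {G B E : Type*} [Group G] [TopologicalSpace B]
    [CompactSpace B] [MeasurableSpace B] [BorelSpace B] [MulAction G B] [ContinuousConstSMul G B]
    {ν : Measure B} [IsFiniteMeasure ν] [ν.IsOpenPosMeasure] [NormedAddCommGroup E]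
    [NormedSpace ℝ E] {c : G → B → ℝ} (hc : IsRNCocycle ν c) {s : Finset G}
    (hs : ∀ γ ∈ s, γ⁻¹ ∈ s) {A : ℝ} (hA : ∀ b, ∑ γ ∈ s, koopmanWeight ν c γ b ≤ A * s.card)
    {h : B → E} (hh : AEStronglyMeasurable h ν) :
    eLpNorm (fun b => (s.card : ℝ)⁻¹ • ∑ γ ∈ s, koopmanWeight ν c γ b • h (γ⁻¹ • b)) 2 ν
      ≤ ENNReal.ofReal A * eLpNorm h 2 ν := by
  rcases s.eq_empty_or_nonempty with rfl | hne
  · simp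
  have hm : (0 : ℝ) < s.card := by exact_mod_cast hne.card_pos
  have hsum_inv : ∀ b, ∑ γ ∈ s, koopmanWeight ν c γ⁻¹ b = ∑ γ ∈ s, koopmanWeight ν c γ b :=
    fun b => Finset.sum_equiv (Equiv.inv G) (fun γ => ⟨hs γ, fun h => by simpa using hs _ h⟩)
      fun _ _ => rfl
  have hmeas : ∀ γ : G, Measurable (koopmanWeight ν c γ) := fun γ =>
    ((hc.continuous γ⁻¹).sqrt.div_const _).measurable
  have hschur := eLpNorm_sum_smul_comp_le (ν := ν) (s := s) (σ := fun γ b => γ⁻¹ • b)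
    (w := koopmanWeight ν c) (w' := fun γ => koopmanWeight ν c γ⁻¹)
    (fun γ _ => ⟨(continuous_const_smul _).measurable, by
      rw [hc.map_inv_smul]; exact withDensity_absolutelyContinuous _ _⟩)
    (koopmanWeight_nonneg ν c) (fun γ => koopmanWeight_nonneg ν c γ⁻¹)
    (fun γ _ => hmeas γ) (fun γ _ => hmeas γ⁻¹)
    (fun γ _ => hc.lintegral_koopmanWeight_mul_comp_inv_smul γ)
    hA (fun b => (hsum_inv b).trans_le (hA b)) hh
  refine (eLpNorm_const_smul (s.card : ℝ)⁻¹
    (fun b => ∑ γ ∈ s, koopmanWeight ν c γ b • h (γ⁻¹ • b)) 2 ν).trans_le ?_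
  calc ‖(s.card : ℝ)⁻¹‖ₑ * eLpNorm (fun b => ∑ γ ∈ s, koopmanWeight ν c γ b • h (γ⁻¹ • b)) 2 ν
      ≤ ENNReal.ofReal (s.card : ℝ)⁻¹ * (ENNReal.ofReal (A * s.card) * eLpNorm h 2 ν) := by
        rw [Real.enorm_of_nonneg (inv_nonneg.2 hm.le)]
        gcongr
    _ = ENNReal.ofReal A * eLpNorm h 2 ν := by
        rw [← mul_assoc, ← ENNReal.ofReal_mul (inv_nonneg.2 hm.le),
          mul_comm A, inv_mul_cancel_left₀ hm.ne']

theorem Stmt1.IsLengthFun.sum_koopmanWeight_mul_toReal_le {G : Type*} [Group G]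
    [TopologicalSpace G] [IsTopologicalGroup G] [MeasurableSpace G] [BorelSpace G]
    {μ : Measure G} [μ.IsHaarMeasure] {𝓛 : G → ℝ} (hlen : Stmt1.IsLengthFun 𝓛)
    (hproper : ∀ t : ℝ, IsCompact {g : G | 𝓛 g ≤ t}) (hG0_compact : IsCompact {g : G | 𝓛 g = 0})
    (hG0_open : IsOpen {g : G | 𝓛 g = 0}) {B : Type*} [TopologicalSpace B] [CompactSpace B]
    [MeasurableSpace B] [BorelSpace B] [MulAction G B] [ContinuousSMul G B] {ν : Measure B}
    [IsProbabilityMeasure ν] [ν.IsOpenPosMeasure] [SMulInvariantMeasure hlen.zeroSubgroup B ν]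
    [MulAction.IsPretransitive hlen.zeroSubgroup B] {c : G → B → ℝ} (hc : IsRNCocycle ν c)
    (hcont : ∀ b, Continuous (c · b)) (hΞ : Continuous (harishChandra ν c)) {U : Set G}
    (hU : IsOpen U) (hUG0 : U ⊆ {g : G | 𝓛 g = 0}) {s : Finset G}
    (hdisj : (s : Set G).PairwiseDisjoint fun γ => (γ⁻¹ * ·) ⁻¹' U) {t : ℝ}
    (hs : ∀ γ ∈ s, 𝓛 γ = t) (b : B) :
    (∑ γ ∈ s, koopmanWeight ν c γ b) * (μ U).toReal ≤ (μ {g | 𝓛 g = t}).toReal := by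
  have hclopen := (hlen.isLocallyConstant hG0_open).isClopen_fiber t
  have hle := hc.sum_koopmanWeight_mul_measure_le (μ := μ) (K := hlen.zeroSubgroup)
    hcont hΞ hG0_compact hG0_open
    ((hproper t).of_isClosed_subset hclopen.isClosed fun g hg => hg.le) hclopen
    (fun k hk => hlen.preimage_mul_left_setOf_eq hk t) hU hUG0 hdisj (fun γ hγ x hx => by
      change 𝓛 x = t
      rw [← hs γ hγ, ← hlen.map_mul_of_map_eq_zero_right (hUG0 hx) γ, mul_inv_cancel_left]) b
  rw [← Finset.sum_mul, ← ENNReal.ofReal_sum_of_nonneg fun γ _ => koopmanWeight_nonneg ν c γ b,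
    ← ENNReal.ofReal_toReal (measure_ne_top_of_subset hUG0 hG0_compact.measure_ne_top),
    ← ENNReal.ofReal_mul (Finset.sum_nonneg fun γ _ => koopmanWeight_nonneg ν c γ b)] at hle
  exact (ENNReal.ofReal_le_iff_le_toReal
    (measure_ne_top_of_subset (fun g hg => hg.le) (hproper t).measure_ne_top)).1 hle

theorem statement1_general
    {G : Type*} [Group G] [TopologicalSpace G] [IsTopologicalGroup G]
    [MeasurableSpace G] [BorelSpace G]
    (μG : Measure G) [μG.IsHaarMeasure]
    (𝓛 : G → ℝ) (hlen : Stmt1.IsLengthFun 𝓛)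
    (hproper : ∀ t : ℝ, IsCompact {g : G | 𝓛 g ≤ t})
    {B : Type*} [TopologicalSpace B] [CompactSpace B]
    [MeasurableSpace B] [BorelSpace B]
    (ν : Measure B) [IsProbabilityMeasure ν]
    [MulAction G B] (hact : Continuous fun p : G × B => p.1 • p.2)
    (hqinv : ∀ g : G, ν.map (fun b : B => g • b) ≪ ν)
    (c : G → B → ℝ) (hc_pos : ∀ g b, 0 < c g b)
    (hc_cont : Continuous fun p : G × B => c p.1 p.2)
    (hc_rn : ∀ g : G,
      (fun b => ENNReal.ofReal (c g b)) =ᵐ[ν] (ν.map (fun b : B => g⁻¹ • b)).rnDeriv ν)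
    (Ξ : G → ℝ) (hΞ : ∀ g : G, Ξ g = ∫ b, Real.sqrt (c g⁻¹ b) ∂ν)
    (hΞ_cont : Continuous Ξ)
    (hG0_compact : IsCompact {g : G | 𝓛 g = 0})
    (hG0_open : IsOpen {g : G | 𝓛 g = 0})
    (hG0_trans : ∀ b b' : B, ∃ g : G, 𝓛 g = 0 ∧ g • b = b')
    (hG0_inv : ∀ g : G, 𝓛 g = 0 → ν.map (fun b : B => g • b) = ν)
    (Λ : Subgroup G) (hdisc : DiscreteTopology Λ)
    (hfin : ∀ n : ℕ, {γ : Λ | 𝓛 (γ : G) = n}.Finite)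
    (hgrowth : ∃ (c₀ : ℝ) (N : ℕ), ∀ n : ℕ, N ≤ n →
      μG {g : G | 𝓛 g = n} ≤ ENNReal.ofReal (c₀ * ((hfin n).toFinset.card : ℝ))) :
    ∃ M : ℝ, ∀ n : ℕ, ((hfin n).toFinset).Nonempty →
      ∀ h : B → ℂ, MemLp h 2 ν →
        eLpNorm (fun b : B =>
            (((hfin n).toFinset.card : ℂ))⁻¹ *
              ∑ γ ∈ (hfin n).toFinset,
                ((Real.sqrt (c ((γ : G))⁻¹ b) : ℂ) * h (((γ : G))⁻¹ • b)) /
                  ((Ξ (γ : G) : ℝ) : ℂ))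
          2 ν ≤ ENNReal.ofReal M * eLpNorm h 2 ν := by
  obtain ⟨c₀, N, hgrowth⟩ := hgrowth
  have : ContinuousSMul G B := ⟨hact⟩
  have : SMulInvariantMeasure hlen.zeroSubgroup B ν := ⟨fun k s hs => by
    change ν ((fun x => (k : G) • x) ⁻¹' s) = ν s
    rw [← map_apply (measurable_const_smul (k : G)) hs, hG0_inv k k.2]⟩
  have : MulAction.IsPretransitive hlen.zeroSubgroup B := ⟨fun b b' => by
    obtain ⟨g, hg, rfl⟩ := hG0_trans b b'
    exact ⟨⟨g, hg⟩, rfl⟩⟩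
  have : ν.IsOpenPosMeasure := ⟨fun U hU hne =>
    (measure_isOpen_pos_of_smulInvariant_of_compact_ne_zero hlen.zeroSubgroup isCompact_univ
      (by simp) hU hne).ne'⟩
  have hc : IsRNCocycle ν c :=
    .of_ae_eq_rnDeriv hqinv hc_pos (fun g => hc_cont.uncurry_left g) hc_rn
  obtain rfl : Ξ = harishChandra ν c := funext hΞ
  obtain ⟨U, hUo, hU1, hUG0, hUΛ⟩ :=
    Λ.exists_isOpen_pairwiseDisjoint_preimage_mul_left (hG0_open.mem_nhds hlen.1)
  have hU : 0 < (μG U).toReal := ENNReal.toReal_pos (hUo.measure_ne_zero μG ⟨1, hU1⟩)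
    (measure_ne_top_of_subset hUG0 hG0_compact.measure_ne_top)
  obtain ⟨R, hR0, hR⟩ := exists_le_ofReal_mul_of_forall_ge
    (fun n => measure_ne_top_of_subset (fun g hg => hg.le) (hproper n).measure_ne_top) hgrowth
  refine ⟨R / (μG U).toReal, fun n hne h hh => ?_⟩
  set s := (hfin n).toFinset.map (Function.Embedding.subtype (· ∈ Λ))
  have hs : ∀ γ, γ ∈ s ↔ 𝓛 γ = n ∧ γ ∈ Λ := by simp [s]
  have hbound : ∀ b, ∑ γ ∈ s, koopmanWeight ν c γ b ≤ R / (μG U).toReal * s.card := fun b => by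
    rw [Finset.card_map, div_mul_eq_mul_div, le_div_iff₀ hU]
    exact (hlen.sum_koopmanWeight_mul_toReal_le hproper hG0_compact hG0_open hc
      (fun b => hc_cont.uncurry_right b) hΞ_cont hUo hUG0 (hUΛ.subset fun γ hγ => ((hs γ).1 hγ).2)
      (fun γ hγ => ((hs γ).1 hγ).1) b).trans
      (ENNReal.toReal_le_of_le_ofReal (by positivity) (hR n hne.card_pos.ne'))
  have hsymm : ∀ γ ∈ s, γ⁻¹ ∈ s := fun γ hγ => (hs _).2
    ⟨by rw [hlen.2.2.1]; exact ((hs γ).1 hγ).1, Λ.inv_mem ((hs γ).1 hγ).2⟩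
  convert hc.eLpNorm_inv_card_smul_sum_le hsymm hbound hh.1 using 3
  simp only [s, Finset.sum_map, Finset.card_map, Function.Embedding.subtype_apply,
    koopmanWeight, Complex.real_smul]
  push_cast
  exact congrArg _ (Finset.sum_congr rfl fun γ _ => by ring)

/-- **Sufficient conditions for the uniform boundedness condition.**
`G` is a locally compact group with left Haar measure `μG` and a proper
integer-valued length function `𝓛`; `B` is a compact Hausdorff space with a
continuous `G`-action leaving a Borel probability measure `ν` quasi-invariant;
`c` is a continuous version of the Radon–Nikodym cocycle
`c(g,b) = d((g⁻¹)_*ν)/dν (b)` and the Harish-Chandra function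
`Ξ(g) = ∫_B c(g⁻¹,b)^{1/2} dν(b)` is continuous; the subgroup
`G₀ = {g : 𝓛 g = 0}` is compact, open, acts transitively on `B` and leaves `ν`
invariant. If `Λ` is a discrete subgroup of `G` with
`μ_G(C^G_n) ≤ c₀·|C^Λ_n|` for all large `n`, then the Koopman averages
`(1/|C^Λ_n|) Σ_{γ ∈ C^Λ_n} π(γ)/Ξ(γ)` are uniformly bounded on `L²(B,ν)`. -/
theorem statement1
    {G : Type*} [Group G] [TopologicalSpace G] [IsTopologicalGroup G]
    [LocallyCompactSpace G] [MeasurableSpace G] [BorelSpace G]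
    (μG : Measure G) [μG.IsHaarMeasure]
    (𝓛 : G → ℝ) (hlen : Stmt1.IsLengthFun 𝓛)
    (hint : ∀ g : G, ∃ n : ℕ, 𝓛 g = n)
    (hproper : ∀ t : ℝ, IsCompact {g : G | 𝓛 g ≤ t})
    {B : Type*} [TopologicalSpace B] [CompactSpace B] [T2Space B]
    [MeasurableSpace B] [BorelSpace B]
    (ν : Measure B) [IsProbabilityMeasure ν]
    [MulAction G B] (hact : Continuous fun p : G × B => p.1 • p.2)
    (hqinv : ∀ g : G, ν.map (fun b : B => g • b) ≪ ν)
    (c : G → B → ℝ) (hc_pos : ∀ g b, 0 < c g b)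
    (hc_cont : Continuous fun p : G × B => c p.1 p.2)
    (hc_rn : ∀ g : G,
      (fun b => ENNReal.ofReal (c g b)) =ᵐ[ν] (ν.map (fun b : B => g⁻¹ • b)).rnDeriv ν)
    (Ξ : G → ℝ) (hΞ : ∀ g : G, Ξ g = ∫ b, Real.sqrt (c g⁻¹ b) ∂ν)
    (hΞ_cont : Continuous Ξ)
    (hG0_compact : IsCompact {g : G | 𝓛 g = 0})
    (hG0_open : IsOpen {g : G | 𝓛 g = 0})
    (hG0_trans : ∀ b b' : B, ∃ g : G, 𝓛 g = 0 ∧ g • b = b')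
    (hG0_inv : ∀ g : G, 𝓛 g = 0 → ν.map (fun b : B => g • b) = ν)
    (Λ : Subgroup G) (hdisc : DiscreteTopology Λ)
    (hfin : ∀ n : ℕ, {γ : Λ | 𝓛 (γ : G) = n}.Finite)
    (hgrowth : ∃ (c₀ : ℝ) (N : ℕ), ∀ n : ℕ, N ≤ n →
      μG {g : G | 𝓛 g = n} ≤ ENNReal.ofReal (c₀ * ((hfin n).toFinset.card : ℝ))) :
    ∃ M : ℝ, ∀ n : ℕ, ((hfin n).toFinset).Nonempty →
      ∀ h : B → ℂ, MemLp h 2 ν →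
        eLpNorm (fun b : B =>
            (((hfin n).toFinset.card : ℂ))⁻¹ *
              ∑ γ ∈ (hfin n).toFinset,
                ((Real.sqrt (c ((γ : G))⁻¹ b) : ℂ) * h (((γ : G))⁻¹ • b)) /
                  ((Ξ (γ : G) : ℝ) : ℂ))
          2 ν ≤ ENNReal.ofReal M * eLpNorm h 2 ν :=
  statement1_general μG 𝓛 hlen hproper ν hact hqinv c hc_pos hc_cont hc_rn Ξ hΞ hΞ_cont hG0_compact
    hG0_open hG0_trans hG0_inv Λ hdisc hfin hgrowth
end

section
/- Let G be a locally compact group with left Haar measure μ_G and a proper, integer-valued length function 𝓛, with C^G_n := {g : 𝓛(g)=n}. Let G act measurably on a space B with quasi-invariant probability measure ν and Radon–Nikodym cocycle c(g,b) := (d((g⁻¹)_*ν)/dν)(b) satisfying the cocycle identity c(g₁g₂,b) = c(g₁,g₂b)·c(g₂,b), and set Ξ(g) := ∫_B c(g⁻¹,b)^{1/2} dν(b). Suppose the subgroup G₀ := {g : 𝓛(g)=0} is compact, acts transitively on B, and leaves ν invariant, and assume c is continuous on G × B for B a compact Hausdorff space with continuous G-action. Then for every n with 0 < μ_G(C^G_n)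 < ∞ and every b ∈ B: (1/μ_G(C^G_n)) ∫_{C^G_n} c(g⁻¹,b)^{1/2}/Ξ(g) dμ_G(g) = 1, i.e. the function M^G_n 1_B is constant equal to 1. -/
/-!
The subgroup `G₀ = {𝓛 = 0}` preserves `ν` and acts transitively on `B`, so `ν` charges every
nonempty open set and the continuous cocycle `c(k, ·)`, being a.e. equal to `dν/dν = 1`, is
identically `1` for `k ∈ G₀`. The cocycle identity then makes the kernel
`P(g, b) = c(g⁻¹, b)^{1/2} / Ξ(g)` invariant under `(g, b) ↦ (kg, kb)`, and the sphere `C^G_n` is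
invariant under left translation by `G₀`; hence `b ↦ ∫_{C^G_n} P(g, b) dμ_G(g)` is `G₀`-invariant,
so constant. Its constant value is its `ν`-mean, which by Fubini equals `μ_G(C^G_n)` because
`∫_B P(g, ·) dν = 1` for every `g`.
-/

open MeasureTheory
open scoped ENNReal

namespace Stmt9

def IsLengthFun {G : Type*} [Group G] (L : G → ℝ) : Prop :=
  L 1 = 0 ∧ (∀ g, 0 ≤ L g) ∧ (∀ g, L g⁻¹ = L g) ∧ ∀ g h, L (g * h) ≤ L g + L h

end Stmt9

open Set

namespace Stmt9.IsLengthFun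

variable {G : Type*} [Group G] {L : G → ℝ}

def zeroSubgroup (hL : IsLengthFun L) : Subgroup G where
  carrier := {g | L g = 0}
  mul_mem' {a b} (ha : L a = 0) (hb : L b = 0) :=
    le_antisymm (by linarith [hL.2.2.2 a b]) (hL.2.1 _)
  one_mem' := hL.1
  inv_mem' {a} ha := by simpa only [mem_ofPred_eq, hL.2.2.1 a] using ha

theorem mem_zeroSubgroup (hL : IsLengthFun L) {g : G} : g ∈ hL.zeroSubgroup ↔ L g = 0 := Iff.rfl

theorem map_mul_of_mem_zeroSubgroup (hL : IsLengthFun L) {k : G} (hk : k ∈ hL.zeroSubgroup)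
    (g : G) : L (k * g) = L g := by
  have h₁ := hL.2.2.2 k g
  have h₂ := hL.2.2.2 k⁻¹ (k * g)
  rw [inv_mul_cancel_left, hL.mem_zeroSubgroup.1 (inv_mem hk)] at h₂
  rw [hL.mem_zeroSubgroup.1 hk] at h₁
  linarith

end Stmt9.IsLengthFun

namespace MeasureTheory

theorem SMulInvariantMeasure.restrict {G α : Type*} [Group G] [MulAction G α] [MeasurableSpace α]
    [MeasurableConstSMul G α] {μ : Measure α} [SMulInvariantMeasure G α μ] {s : Set α}
    (hs : ∀ c : G, (c • ·) ⁻¹' s = s) : SMulInvariantMeasure G α (μ.restrict s) := by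
  refine ⟨fun c A hA => ?_⟩
  rw [Measure.restrict_apply hA, Measure.restrict_apply (hA.preimage (measurable_const_smul c)),
    ← hs c, ← preimage_inter, hs c, MeasureTheory.measure_preimage_smul]

theorem isOpenPosMeasure_of_smulInvariant (G : Type*) {α : Type*} [Group G] [MulAction G α]
    [TopologicalSpace α] [CompactSpace α] [ContinuousConstSMul G α] [MulAction.IsMinimal G α]
    [MeasurableSpace α] (μ : Measure α) [NeZero μ] [SMulInvariantMeasure G α μ] :
    μ.IsOpenPosMeasure :=
  ⟨fun _ hU hne => (measure_isOpen_pos_of_smulInvariant_of_compact_ne_zero G isCompact_univ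
    (NeZero.ne _) hU hne).ne'⟩

theorem eq_one_of_ofReal_ae_eq_rnDeriv_self {α : Type*} [TopologicalSpace α] [MeasurableSpace α]
    {μ : Measure α} [μ.IsOpenPosMeasure] [SigmaFinite μ] {f : α → ℝ} (hf : Continuous f)
    (h : (fun x => ENNReal.ofReal (f x)) =ᵐ[μ] μ.rnDeriv μ) : f = 1 := by
  refine (hf.ae_eq_iff_eq μ continuous_const).1 ?_
  filter_upwards [h.trans (Measure.rnDeriv_self μ)] with x hx
  exact ENNReal.ofReal_eq_one.1 hx

theorem integral_pos_of_continuous_of_pos {α : Type*} [TopologicalSpace α] [CompactSpace α]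
    [Nonempty α] [MeasurableSpace α] [OpensMeasurableSpace α] {μ : Measure α} [IsFiniteMeasure μ]
    [μ.IsOpenPosMeasure] {f : α → ℝ} (hf : Continuous f) (hpos : ∀ x, 0 < f x) :
    0 < ∫ x, f x ∂μ :=
  integral_pos_of_integrable_nonneg_nonzero (x := Classical.arbitrary α) hf
    (hf.integrable_of_hasCompactSupport (.of_compactSpace f)) (fun x => (hpos x).le)
    (hpos _).ne'

theorem continuous_integral_of_compactSpace {X Y : Type*} [TopologicalSpace X]
    [TopologicalSpace Y] [MeasurableSpace Y] [OpensMeasurableSpace Y] [CompactSpace Y]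
    {f : X → Y → ℝ} (hf : Continuous f.uncurry) (ν : Measure Y) [IsFiniteMeasure ν] :
    Continuous fun x => ∫ y, f x y ∂ν :=
  continuousOn_univ.1 <| continuousOn_integral_of_compact_support isCompact_univ
    hf.continuousOn (fun _ _ _ hy => (hy (mem_univ _)).elim)

/-- Without second countability a continuous function on `X × Y` need not be measurable for the
product σ-algebra; a compactly supported cutoff `χ = 1` on `K` reduces to the compact-support
Fubini theorem, which does not need it. -/
theorem integral_integral_swap_of_ae_mem_isCompact {X Y : Type*} [TopologicalSpace X]
    [RegularSpace X] [LocallyCompactSpace X] [MeasurableSpace X] [OpensMeasurableSpace X]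
    [TopologicalSpace Y] [CompactSpace Y] [MeasurableSpace Y] [OpensMeasurableSpace Y]
    {ρ : Measure X} [IsFiniteMeasure ρ] {ν : Measure Y} [IsFiniteMeasure ν] {K : Set X}
    (hK : IsCompact K) (hρK : ∀ᵐ x ∂ρ, x ∈ K) {f : X → Y → ℝ} (hf : Continuous f.uncurry) :
    ∫ x, ∫ y, f x y ∂ν ∂ρ = ∫ y, ∫ x, f x y ∂ρ ∂ν := by
  obtain ⟨χ, hχK, -, hχ_supp, -⟩ :=
    exists_continuous_one_zero_of_isCompact hK isClosed_empty (disjoint_empty K)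
  have hχf : ∀ᵐ x ∂ρ, ∀ y, χ x * f x y = f x y := by
    filter_upwards [hρK] with x hx y
    rw [hχK hx, Pi.one_apply, one_mul]
  have hcut : Continuous (fun x y => χ x * f x y).uncurry :=
    (χ.continuous.comp continuous_fst).mul hf
  have hcut_supp : HasCompactSupport (fun x y => χ x * f x y).uncurry := by
    refine .intro' (hχ_supp.prod isCompact_univ) ((isClosed_tsupport χ).prod isClosed_univ)
      fun p hp => ?_
    have hχp : χ p.1 = 0 := image_eq_zero_of_notMem_tsupport fun h => hp ⟨h, mem_univ _⟩
    simp [Function.uncurry, hχp]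
  calc ∫ x, ∫ y, f x y ∂ν ∂ρ = ∫ x, ∫ y, χ x * f x y ∂ν ∂ρ :=
        integral_congr_ae (hχf.mono fun x hx => by simp only [hx])
    _ = ∫ y, ∫ x, χ x * f x y ∂ρ ∂ν := integral_integral_swap_of_hasCompactSupport hcut hcut_supp
    _ = ∫ y, ∫ x, f x y ∂ρ ∂ν :=
        integral_congr_ae (ae_of_all _ fun y => integral_congr_ae (hχf.mono fun x hx => hx y))

theorem integral_eq_measureReal_univ_of_smulInvariant {H X B : Type*} [Group H] [MulAction H X]
    [MulAction H B] [MeasurableSpace X] [MeasurableSpace B] [MeasurableConstSMul H X]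
    [MulAction.IsPretransitive H B] (ρ : Measure X) [SMulInvariantMeasure H X ρ]
    (ν : Measure B) [IsProbabilityMeasure ν] {f : X → B → ℝ}
    (hf : ∀ (k : H) x b, f (k • x) (k • b) = f x b) (hmass : ∀ x, ∫ b, f x b ∂ν = 1)
    (hswap : ∫ x, ∫ b, f x b ∂ν ∂ρ = ∫ b, ∫ x, f x b ∂ρ ∂ν) (b : B) :
    ∫ x, f x b ∂ρ = ρ.real univ := by
  have hconst : ∀ b', ∫ x, f x b' ∂ρ = ∫ x, f x b ∂ρ := fun b' => by
    obtain ⟨k, rfl⟩ := MulAction.exists_smul_eq H b b'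
    calc ∫ x, f x (k • b) ∂ρ = ∫ x, f (k • x) (k • b) ∂ρ :=
          (integral_smul_eq_self (fun x => f x (k • b))).symm
      _ = ∫ x, f x b ∂ρ := by simp only [hf]
  calc ∫ x, f x b ∂ρ = ∫ b', ∫ x, f x b' ∂ρ ∂ν := by
        simp only [hconst, integral_const, probReal_univ, one_smul]
    _ = ρ.real univ := by simp only [← hswap, hmass, integral_const, smul_eq_mul, mul_one]

end MeasureTheory

namespace Stmt9

theorem IsLengthFun.smulInvariantMeasure_restrict {G : Type*} [Group G] [MeasurableSpace G]
    [MeasurableMul G] {L : G → ℝ} (hL : IsLengthFun L) (μ : Measure G) [μ.IsMulLeftInvariant]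
    (t : ℝ) : SMulInvariantMeasure hL.zeroSubgroup G (μ.restrict {g | L g = t}) :=
  SMulInvariantMeasure.restrict fun k => by
    ext g
    simp [Subgroup.smul_def, hL.map_mul_of_mem_zeroSubgroup k.2]

end Stmt9

section Cocycle

variable {G B : Type*} [Group G] {c : G → B → ℝ}

theorem cocycle_inv_mul_left_smul [MulAction G B]
    (hc : ∀ g₁ g₂ : G, ∀ b : B, c (g₁ * g₂) b = c g₁ (g₂ • b) * c g₂ b) {k : G}
    (hk : ∀ b, c k⁻¹ b = 1) (g : G) (b : B) : c (k * g)⁻¹ (k • b) = c g⁻¹ b := by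
  rw [mul_inv_rev, hc, hk, mul_one, inv_smul_smul]

noncomputable def harishChandraXi [MeasurableSpace B] (ν : Measure B) (c : G → B → ℝ) (g : G) :
    ℝ :=
  ∫ b, Real.sqrt (c g⁻¹ b) ∂ν

variable [MeasurableSpace B] {ν : Measure B}

theorem harishChandraXi_mul_left [MulAction G B] [MeasurableConstSMul G B]
    (H : Subgroup G) [SMulInvariantMeasure H B ν]
    (hc : ∀ g₁ g₂ : G, ∀ b : B, c (g₁ * g₂) b = c g₁ (g₂ • b) * c g₂ b)
    (hH : ∀ k ∈ H, ∀ b, c k b = 1) {k : G} (hk : k ∈ H) (g : G) :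
    harishChandraXi ν c (k * g) = harishChandraXi ν c g := by
  rw [harishChandraXi, ← integral_smul_eq_self (μ := ν) _ (g := (⟨k, hk⟩ : H))]
  simp only [Subgroup.mk_smul, cocycle_inv_mul_left_smul hc (hH _ (inv_mem hk)), harishChandraXi]

noncomputable def koopmanKernel (ν : Measure B) (c : G → B → ℝ) (g : G) (b : B) : ℝ :=
  Real.sqrt (c g⁻¹ b) / harishChandraXi ν c g

theorem koopmanKernel_smul_smul [MulAction G B] [MeasurableConstSMul G B]
    (H : Subgroup G) [SMulInvariantMeasure H B ν]
    (hc : ∀ g₁ g₂ : G, ∀ b : B, c (g₁ * g₂) b = c g₁ (g₂ • b) * c g₂ b)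
    (hH : ∀ k ∈ H, ∀ b, c k b = 1) (k : H) (g : G) (b : B) :
    koopmanKernel ν c (k • g) (k • b) = koopmanKernel ν c g b := by
  simp only [koopmanKernel, Subgroup.smul_def, smul_eq_mul, harishChandraXi_mul_left H hc hH k.2,
    cocycle_inv_mul_left_smul hc (hH _ (inv_mem k.2))]

theorem integral_koopmanKernel {g : G} (hg : harishChandraXi ν c g ≠ 0) :
    ∫ b, koopmanKernel ν c g b ∂ν = 1 := by
  simp only [koopmanKernel]
  rw [integral_div, ← harishChandraXi, div_self hg]

variable [TopologicalSpace G] [TopologicalSpace B] [OpensMeasurableSpace B] [CompactSpace B]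
  [IsFiniteMeasure ν]

theorem continuous_harishChandraXi [ContinuousInv G] (hc : Continuous fun p : G × B => c p.1 p.2) :
    Continuous (harishChandraXi ν c) :=
  continuous_integral_of_compactSpace (f := fun g b => Real.sqrt (c g⁻¹ b))
    (Real.continuous_sqrt.comp (hc.comp (continuous_fst.inv.prodMk continuous_snd))) ν

theorem harishChandraXi_pos [Nonempty B] [ν.IsOpenPosMeasure]
    (hc : Continuous fun p : G × B => c p.1 p.2) (hc_pos : ∀ g b, 0 < c g b) (g : G) :
    0 < harishChandraXi ν c g :=
  integral_pos_of_continuous_of_pos (Real.continuous_sqrt.comp (hc.comp (.prodMk_right _)))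
    fun b => Real.sqrt_pos.2 (hc_pos _ b)

theorem continuous_koopmanKernel [ContinuousInv G] [Nonempty B] [ν.IsOpenPosMeasure]
    (hc : Continuous fun p : G × B => c p.1 p.2) (hc_pos : ∀ g b, 0 < c g b) :
    Continuous (koopmanKernel ν c).uncurry :=
  (Real.continuous_sqrt.comp (hc.comp (continuous_fst.inv.prodMk continuous_snd))).div
    ((continuous_harishChandraXi hc).comp continuous_fst)
    fun p => (harishChandraXi_pos hc hc_pos p.1).ne'

end Cocycle

theorem statement9_general
    {G : Type*} [Group G] [TopologicalSpace G] [IsTopologicalGroup G]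
    [LocallyCompactSpace G] [MeasurableSpace G] [BorelSpace G]
    (μG : Measure G) [μG.IsHaarMeasure]
    (𝓛 : G → ℝ) (hlen : Stmt9.IsLengthFun 𝓛)
    (hproper : ∀ t : ℝ, IsCompact {g : G | 𝓛 g ≤ t})
    {B : Type*} [TopologicalSpace B] [CompactSpace B]
    [MeasurableSpace B] [BorelSpace B]
    (ν : Measure B) [IsProbabilityMeasure ν]
    [MulAction G B] (hact : Continuous fun p : G × B => p.1 • p.2)
    (c : G → B → ℝ) (hc_pos : ∀ g b, 0 < c g b)
    (hc_cont : Continuous fun p : G × B => c p.1 p.2)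
    (hc_rn : ∀ g : G,
      (fun b => ENNReal.ofReal (c g b)) =ᵐ[ν] (ν.map (fun b : B => g⁻¹ • b)).rnDeriv ν)
    (hc_cocycle : ∀ g₁ g₂ : G, ∀ b : B, c (g₁ * g₂) b = c g₁ (g₂ • b) * c g₂ b)
    (Ξ : G → ℝ) (hΞ : ∀ g : G, Ξ g = ∫ b, Real.sqrt (c g⁻¹ b) ∂ν)
    (hG0_trans : ∀ b b' : B, ∃ g : G, 𝓛 g = 0 ∧ g • b = b')
    (hG0_inv : ∀ g : G, 𝓛 g = 0 → ν.map (fun b : B => g • b) = ν) :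
    ∀ n : ℕ, 0 < μG {g : G | 𝓛 g = n} → μG {g : G | 𝓛 g = n} < ⊤ →
      ∀ b : B,
        ∫ g in {g : G | 𝓛 g = n}, Real.sqrt (c g⁻¹ b) / Ξ g ∂μG =
          (μG {g : G | 𝓛 g = n}).toReal := by
  intro n _ hfin b
  obtain rfl : Ξ = harishChandraXi ν c := funext hΞ
  have : Nonempty B := ⟨b⟩
  have : ContinuousSMul G B := ⟨hact⟩
  have : SMulInvariantMeasure hlen.zeroSubgroup B ν :=
    ((smulInvariantMeasure_tfae _ ν).out 0 5).2 fun k : hlen.zeroSubgroup => hG0_inv k k.2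
  have : MulAction.IsPretransitive hlen.zeroSubgroup B := ⟨fun b b' => by
    obtain ⟨k, hk, rfl⟩ := hG0_trans b b'
    exact ⟨⟨k, hk⟩, rfl⟩⟩
  have := isOpenPosMeasure_of_smulInvariant hlen.zeroSubgroup ν
  have hc_one : ∀ k ∈ hlen.zeroSubgroup, ∀ b, c k b = 1 := fun k hk => congrFun <|
    eq_one_of_ofReal_ae_eq_rnDeriv_self (hc_cont.comp (.prodMk_right k))
      (by simpa only [hG0_inv k⁻¹ (inv_mem hk)] using hc_rn k)
  have := hlen.smulInvariantMeasure_restrict μG n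
  have : IsFiniteMeasure (μG.restrict {g | 𝓛 g = n}) := ⟨by simpa using hfin⟩
  have hsphere : ∀ᵐ g ∂μG.restrict {g | 𝓛 g = n}, g ∈ closure {g : G | 𝓛 g ≤ n} :=
    ae_restrict_of_ae_restrict_of_subset (fun g (hg : 𝓛 g = n) => subset_closure hg.le)
      (ae_restrict_mem isClosed_closure.measurableSet)
  refine (integral_eq_measureReal_univ_of_smulInvariant (f := koopmanKernel ν c) _ ν
    (koopmanKernel_smul_smul _ hc_cocycle hc_one)
    (fun g => integral_koopmanKernel (harishChandraXi_pos hc_cont hc_pos g).ne')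
    (integral_integral_swap_of_ae_mem_isCompact (hproper n).closure hsphere
      (continuous_koopmanKernel hc_cont hc_pos)) b).trans ?_
  rw [measureReal_def, Measure.restrict_apply_univ]

/-- **The continuous Koopman mean applied to `1_B` is constant equal to `1`.**
`G` is a locally compact group with left Haar measure `μG` and a proper
integer-valued length function `𝓛`; `B` is a compact Hausdorff space with
continuous `G`-action, `ν` a quasi-invariant Borel probability measure with
continuous positive cocycle `c` satisfying the cocycle identity, and
`Ξ(g) = ∫_B c(g⁻¹,b)^{1/2} dν`. If the subgroup `G₀ = {𝓛 = 0}` is compact,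
acts transitively on `B` and leaves `ν` invariant, then for every `n` with
`0 < μG(C^G_n) < ∞` and every `b ∈ B`,
`(1/μG(C^G_n)) ∫_{C^G_n} c(g⁻¹,b)^{1/2}/Ξ(g) dμG = 1`. -/
theorem statement9
    {G : Type*} [Group G] [TopologicalSpace G] [IsTopologicalGroup G]
    [LocallyCompactSpace G] [MeasurableSpace G] [BorelSpace G]
    (μG : Measure G) [μG.IsHaarMeasure]
    (𝓛 : G → ℝ) (hlen : Stmt9.IsLengthFun 𝓛)
    (hint : ∀ g : G, ∃ n : ℕ, 𝓛 g = n)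
    (hproper : ∀ t : ℝ, IsCompact {g : G | 𝓛 g ≤ t})
    {B : Type*} [TopologicalSpace B] [CompactSpace B] [T2Space B]
    [MeasurableSpace B] [BorelSpace B]
    (ν : Measure B) [IsProbabilityMeasure ν]
    [MulAction G B] (hact : Continuous fun p : G × B => p.1 • p.2)
    (hqinv : ∀ g : G, ν.map (fun b : B => g • b) ≪ ν)
    (c : G → B → ℝ) (hc_pos : ∀ g b, 0 < c g b)
    (hc_cont : Continuous fun p : G × B => c p.1 p.2)
    (hc_rn : ∀ g : G,
      (fun b => ENNReal.ofReal (c g b)) =ᵐ[ν] (ν.map (fun b : B => g⁻¹ • b)).rnDeriv ν)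
    (hc_cocycle : ∀ g₁ g₂ : G, ∀ b : B, c (g₁ * g₂) b = c g₁ (g₂ • b) * c g₂ b)
    (Ξ : G → ℝ) (hΞ : ∀ g : G, Ξ g = ∫ b, Real.sqrt (c g⁻¹ b) ∂ν)
    (hG0_compact : IsCompact {g : G | 𝓛 g = 0})
    (hG0_trans : ∀ b b' : B, ∃ g : G, 𝓛 g = 0 ∧ g • b = b')
    (hG0_inv : ∀ g : G, 𝓛 g = 0 → ν.map (fun b : B => g • b) = ν) :
    ∀ n : ℕ, 0 < μG {g : G | 𝓛 g = n} → μG {g : G | 𝓛 g = n} < ⊤ →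
      ∀ b : B,
        ∫ g in {g : G | 𝓛 g = n}, Real.sqrt (c g⁻¹ b) / Ξ g ∂μG =
          (μG {g : G | 𝓛 g = n}).toReal :=
  statement9_general μG 𝓛 hlen hproper ν hact c hc_pos hc_cont hc_rn hc_cocycle Ξ hΞ hG0_trans
    hG0_inv
end
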